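/- arXiv:2302.02514 — 5 statements merged into one kernel-verified Lean document; each statement's English description precedes it below -/
import Mathlib

section
/- Let ℓ be a prime, n ≥ 1, ζ a primitive ℓ^n-th root of unity, and m ≥ 1 an integer not divisible by ℓ^n. If m is not a power of ℓ, then Φ_m(ζ) is a unit in the ring of integers of ℚ(ζ), where Φ_m is the m-th cyclotomic polynomial. -/
open NumberField Polynomial

/-- If `η` is a primitive `ℓ^j`-th root of unity with `j ≥ 1` in a domain,
then `1 - η` divides `ℓ`. -/
lemma aux_one_sub_dvd {R : Type*} [CommRing R] [IsDomain R] {ℓ j : ℕ} (hℓ : ℓ.Prime)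
    (hj : 1 ≤ j) {η : R} (hη : IsPrimitiveRoot η (ℓ ^ j)) : (1 - η) ∣ (ℓ : R) := by
  haveI : Fact ℓ.Prime := ⟨hℓ⟩
  obtain ⟨j, rfl⟩ : ∃ j', j = j' + 1 := ⟨j - 1, (Nat.succ_pred_eq_of_pos hj).symm⟩
  have h := eval_one_cyclotomic_prime_pow (R := R) j (p := ℓ)
  rw [cyclotomic_eq_prod_X_sub_primitiveRoots hη, eval_prod] at h
  rw [← h]
  have hmem : η ∈ primitiveRoots (ℓ ^ (j + 1)) R :=
    (mem_primitiveRoots (pow_pos hℓ.pos _)).mpr hη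
  have := Finset.dvd_prod_of_mem (fun μ => eval 1 (X - C μ)) hmem
  simpa using this

theorem stmt_1 (ℓ : ℕ) (hℓ : ℓ.Prime) (n : ℕ) (hn : 1 ≤ n)
    (K : Type*) [Field K] [NumberField K] (ζ : 𝓞 K)
    (hζ : IsPrimitiveRoot ζ (ℓ ^ n))
    (hgen : Algebra.adjoin ℚ {(ζ : K)} = ⊤)
    (m : ℕ) (hm : 1 ≤ m) (hdvd : ¬ (ℓ ^ n ∣ m)) (hpow : ∀ u : ℕ, m ≠ ℓ ^ u) :
    IsUnit ((Polynomial.cyclotomic m (𝓞 K)).eval ζ) := by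
  by_contra hx
  obtain ⟨P, hPmax, hxP⟩ := exists_max_ideal_of_mem_nonunits hx
  have hPprime : P.IsPrime := hPmax.isPrime
  have hne_top : (1 : 𝓞 K) ∉ P := fun h => hPprime.ne_top ((Ideal.eq_top_iff_one P).mpr h)
  -- Step 1 : `ζ^m - 1 ∈ P` since `Φ_m(ζ)` divides it.
  have h1 : (ζ ^ m - 1) ∈ P := by
    have hprod : ζ ^ m - 1 = ∏ d ∈ m.divisors, (cyclotomic d (𝓞 K)).eval ζ := by
      rw [← eval_prod, prod_cyclotomic_eq_X_pow_sub_one hm (𝓞 K)]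
      simp
    obtain ⟨y, hy⟩ := Finset.dvd_prod_of_mem (fun d => (cyclotomic d (𝓞 K)).eval ζ)
      (Nat.mem_divisors_self m (by omega))
    rw [hprod, hy]
    exact Ideal.mul_mem_right _ _ hxP
  -- Step 2 : `ℓ ∈ P`.
  have hη1 : (ζ ^ m) ^ (ℓ ^ n) = 1 := by
    rw [← pow_mul, mul_comm, pow_mul, hζ.pow_eq_one, one_pow]
  have hηne : ζ ^ m ≠ 1 := fun h => hdvd (hζ.dvd_of_pow_eq_one m h)
  obtain ⟨j, hjn, hj⟩ := (Nat.dvd_prime_pow hℓ).mp (orderOf_dvd_of_pow_eq_one hη1)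
  have hj1 : 1 ≤ j := by
    rcases Nat.eq_zero_or_pos j with rfl | h
    · exfalso; exact hηne (orderOf_eq_one_iff.mp (by simpa using hj))
    · exact h
  have hη : IsPrimitiveRoot (ζ ^ m) (ℓ ^ j) := hj ▸ IsPrimitiveRoot.orderOf (ζ ^ m)
  have hℓP : ((ℓ : ℕ) : 𝓞 K) ∈ P := by
    obtain ⟨w, hw⟩ := aux_one_sub_dvd hℓ hj1 hη
    rw [hw]
    exact Ideal.mul_mem_right _ _ (by simpa using P.neg_mem h1)
  -- Step 3 : `1 - ζ ∈ P`.
  haveI : Fact ℓ.Prime := ⟨hℓ⟩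
  have hζ1P : (1 - ζ) ∈ P := by
    obtain ⟨n', rfl⟩ : ∃ n', n = n' + 1 := ⟨n - 1, (Nat.succ_pred_eq_of_pos hn).symm⟩
    have h := eval_one_cyclotomic_prime_pow (R := 𝓞 K) n' (p := ℓ)
    rw [cyclotomic_eq_prod_X_sub_primitiveRoots hζ, eval_prod] at h
    rw [← h] at hℓP
    haveI := hPprime
    obtain ⟨μ, hμmem, hμP⟩ := Ideal.IsPrime.prod_mem_iff.mp hℓP
    simp only [eval_sub, eval_X, eval_C] at hμP
    have hμ : IsPrimitiveRoot μ (ℓ ^ (n' + 1)) :=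
      (mem_primitiveRoots (pow_pos hℓ.pos _)).mp hμmem
    haveI : NeZero (ℓ ^ (n' + 1)) := ⟨(pow_pos hℓ.pos _).ne'⟩
    obtain ⟨s, -, hs⟩ := hμ.eq_pow_of_pow_eq_one hζ.pow_eq_one
    obtain ⟨w, hw⟩ : (1 - μ) ∣ (1 - ζ) := by
      rw [← hs]
      simpa using sub_dvd_pow_sub_pow 1 μ s
    rw [hw]
    exact Ideal.mul_mem_right _ _ hμP
  -- Step 4 : `Φ_m(1) ∈ P`.
  have heP : (cyclotomic m (𝓞 K)).eval 1 ∈ P := by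
    obtain ⟨w, hw⟩ := sub_dvd_eval_sub ζ 1 (cyclotomic m (𝓞 K))
    have hdiff : (cyclotomic m (𝓞 K)).eval ζ - (cyclotomic m (𝓞 K)).eval 1 ∈ P := by
      rw [hw]
      exact Ideal.mul_mem_right _ _ (by simpa using P.neg_mem hζ1P)
    have := P.sub_mem hxP hdiff
    simpa using this
  -- Step 5 : the contradiction.
  by_cases hpp : ∃ q k, q.Prime ∧ m = q ^ k
  · obtain ⟨q, k, hq, rfl⟩ := hpp
    have hk1 : 1 ≤ k := by
      rcases Nat.eq_zero_or_pos k with rfl | h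
      · exact absurd (by simp : q ^ 0 = ℓ ^ 0) (hpow 0)
      · exact h
    have hqℓ : q ≠ ℓ := by
      rintro rfl
      exact hpow k rfl
    obtain ⟨k, rfl⟩ : ∃ k', k = k' + 1 := ⟨k - 1, (Nat.succ_pred_eq_of_pos hk1).symm⟩
    haveI : Fact q.Prime := ⟨hq⟩
    rw [eval_one_cyclotomic_prime_pow] at heP
    have hcop : IsCoprime ((q : ℤ)) ((ℓ : ℤ)) :=
      Int.isCoprime_iff_gcd_eq_one.mpr ((Nat.coprime_primes hq hℓ).mpr hqℓ)
    obtain ⟨a, b, hab⟩ := hcop.map (algebraMap ℤ (𝓞 K))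
    push_cast at hab
    apply hne_top
    rw [← hab]
    exact P.add_mem (Ideal.mul_mem_left _ _ heP) (Ideal.mul_mem_left _ _ hℓP)
  · rw [eval_one_cyclotomic_not_prime_pow
      (fun {p} hp k hk => hpp ⟨p, k, hp, hk.symm⟩)] at heP
    exact hne_top heP
end

section
/- Let ℓ be a prime, n ≥ 1, ζ a primitive ℓ^n-th root of unity, and m ≥ 1 with ℓ^n ∤ m. Then Φ_m(ζ) is an S-unit, where S consists of the unique prime above ℓ; that is, the ideal generated by Φ_m(ζ) is a power of the prime ideal (1-ζ). -/
/-!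
`Φ_m(ζ)` divides `ζ ^ m - 1`, and `t = ζ ^ m ≠ 1` is a root of unity of order `ℓ ^ (j + 1)`,
hence a root of `Φ_{ℓ ^ (j + 1)}`; evaluating `X - t ∣ Φ_{ℓ ^ (j + 1)}` at `1` gives
`1 - t ∣ ℓ`. So `Φ_m(ζ)` divides `ℓ`, which is associated to a power of the prime `ζ - 1`,
and every divisor of a prime power is associated to a prime power.
-/

open NumberField Polynomial

theorem Polynomial.eval_cyclotomic_dvd_pow_sub_one {R : Type*} [CommRing R] (m : ℕ) (t : R) :
    (cyclotomic m R).eval t ∣ t ^ m - 1 := by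
  simpa using eval_dvd (x := t) (cyclotomic.dvd_X_pow_sub_one m R)

theorem sub_one_dvd_prime_of_pow_prime_pow_eq_one {R : Type*} [CommRing R] [IsDomain R]
    {p : ℕ} [Fact p.Prime] {n : ℕ} {t : R} (ht : t ^ p ^ n = 1) (ht₁ : t ≠ 1) :
    t - 1 ∣ (p : R) := by
  obtain ⟨i, -, hi⟩ := (Nat.dvd_prime_pow Fact.out).1 (orderOf_dvd_of_pow_eq_one ht)
  obtain ⟨j, rfl⟩ : ∃ j, i = j + 1 :=
    Nat.exists_eq_succ_of_ne_zero fun h ↦ ht₁ (orderOf_eq_one_iff.1 (by simp [hi, h]))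
  have hroot : (cyclotomic (p ^ (j + 1)) R).IsRoot t :=
    (hi ▸ IsPrimitiveRoot.orderOf t).isRoot_cyclotomic (pos_of_ne_zero (NeZero.ne _))
  have h := eval_dvd (x := 1) (dvd_iff_isRoot.2 hroot)
  rw [eval_one_cyclotomic_prime_pow, eval_sub, eval_X, eval_C, ← neg_sub] at h
  exact neg_dvd.1 h

theorem IsCyclotomicExtension.of_adjoin_eq_top {A B : Type*} [CommRing A] [CommRing B]
    [IsDomain B] [Algebra A B] {n : ℕ} [NeZero n] {ζ : B} (hζ : IsPrimitiveRoot ζ n)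
    (h : Algebra.adjoin A {ζ} = ⊤) : IsCyclotomicExtension {n} A B :=
  have := (isCyclotomicExtension_singleton_iff_eq_adjoin n (⊤ : Subalgebra A B) hζ).2 h.symm
  IsCyclotomicExtension.equiv _ A _ Subalgebra.topEquiv

theorem IsCyclotomicExtension.Rat.associated_zeta_sub_one_pow_prime_pow (p k : ℕ)
    [Fact p.Prime] {K : Type*} [Field K] [NumberField K]
    [IsCyclotomicExtension {p ^ (k + 1)} ℚ K] {ζ : K} (hζ : IsPrimitiveRoot ζ (p ^ (k + 1))) :
    Associated ((hζ.toInteger - 1) ^ Module.finrank ℚ K) (p : 𝓞 K) := by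
  have h := map_eq_span_zeta_sub_one_pow p k hζ
  rw [Ideal.map_span, Set.image_singleton, Ideal.span_singleton_pow, eq_comm,
    Ideal.span_singleton_eq_span_singleton] at h
  simpa using h

theorem stmt_2_general (ℓ : ℕ) (hℓ : ℓ.Prime) (n : ℕ)
    (K : Type*) [Field K] [NumberField K] (ζ : 𝓞 K)
    (hζ : IsPrimitiveRoot ζ (ℓ ^ n))
    (hgen : Algebra.adjoin ℚ {(ζ : K)} = ⊤)
    (m : ℕ) (hdvd : ¬ (ℓ ^ n ∣ m)) :
    ∃ k : ℕ, Ideal.span {(Polynomial.cyclotomic m (𝓞 K)).eval ζ} =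
      (Ideal.span {(1 : 𝓞 K) - ζ}) ^ k := by
  obtain _ | n := n
  · simp at hdvd
  have : Fact ℓ.Prime := ⟨hℓ⟩
  have hζK : IsPrimitiveRoot (ζ : K) (ℓ ^ (n + 1)) :=
    hζ.map_of_injective RingOfIntegers.coe_injective
  have := IsCyclotomicExtension.of_adjoin_eq_top hζK hgen
  have hπ : Prime (ζ - 1) := hζK.zeta_sub_one_prime
  have hℓπ : Associated ((ζ - 1) ^ Module.finrank ℚ K) (ℓ : 𝓞 K) :=
    IsCyclotomicExtension.Rat.associated_zeta_sub_one_pow_prime_pow ℓ n hζK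
  have hdvdℓ : (cyclotomic m (𝓞 K)).eval ζ ∣ ℓ :=
    (eval_cyclotomic_dvd_pow_sub_one m ζ).trans <| sub_one_dvd_prime_of_pow_prime_pow_eq_one
      (by rw [← pow_mul, mul_comm, pow_mul, hζ.pow_eq_one, one_pow])
      fun h ↦ hdvd (hζ.dvd_of_pow_eq_one m h)
  obtain ⟨k, -, hk⟩ := (dvd_prime_pow hπ _).1 (hdvdℓ.trans hℓπ.symm.dvd)
  refine ⟨k, ?_⟩
  rw [Ideal.span_singleton_pow, Ideal.span_singleton_eq_span_singleton, ← neg_sub, neg_pow]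
  exact hk.trans (associated_unit_mul_right _ _ (isUnit_neg_one.pow k))

theorem stmt_2 (ℓ : ℕ) (hℓ : ℓ.Prime) (n : ℕ) (hn : 1 ≤ n)
    (K : Type*) [Field K] [NumberField K] (ζ : 𝓞 K)
    (hζ : IsPrimitiveRoot ζ (ℓ ^ n))
    (hgen : Algebra.adjoin ℚ {(ζ : K)} = ⊤)
    (m : ℕ) (hm : 1 ≤ m) (hdvd : ¬ (ℓ ^ n ∣ m)) :
    ∃ k : ℕ, Ideal.span {(Polynomial.cyclotomic m (𝓞 K)).eval ζ} =
      (Ideal.span {(1 : 𝓞 K) - ζ}) ^ k :=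
  stmt_2_general ℓ hℓ n K ζ hζ hgen m hdvd
end

section
/- Let K be a field of characteristic ≠ 2, and L = K(√α₁, …, √α_r) where α₁, …, α_r ∈ K^×. Then for any x ∈ K such that x is a square in L, one has x = α₁^{e₁} ⋯ α_r^{e_r} · q² for some integers e₁,…,e_r ∈ {0,1} and some q ∈ K. -/
/-
Adjoin the square roots one at a time. In a quadratic step `F ⊆ F(γ)` with `γ² = c ∈ F`, every
element is `a + bγ` with `a, b ∈ F`, and `(a + bγ)² = a² + b²c + 2abγ`. If this lies in `F` and
`2ab ≠ 0`, then `γ ∈ F`; otherwise `a = 0` or `b = 0`. So an element `z ∈ F` that is a square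
in `F(γ)` is either a square in `F` or `c` times one, and then `c · z` is a square in `F`.
Induction on the number of adjoined roots collects the factors `αᵢ`.
-/

open IntermediateField

section
variable {F E : Type*} [Field F] [Field E] [Algebra F E] {γ : E} {c : F}

theorem exists_eq_add_mul_of_mem_adjoin_sqrt (hγ : γ ^ 2 = algebraMap F E c) {y : E}
    (hy : y ∈ F⟮γ⟯) : ∃ a b : F, y = algebraMap F E a + algebraMap F E b * γ := by
  have hγc : IsAlgebraic F γ :=
    ⟨.X ^ 2 - .C c, Polynomial.X_pow_sub_C_ne_zero two_pos c, by simp [hγ]⟩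
  rw [← mem_toSubalgebra, adjoin_simple_toSubalgebra_of_isAlgebraic hγc] at hy
  induction hy using Algebra.adjoin_induction with
  | mem w hw => exact ⟨0, 1, by simp [Set.mem_singleton_iff.mp hw]⟩
  | algebraMap a => exact ⟨a, 0, by simp⟩
  | add u v _ _ hu hv =>
    obtain ⟨a, b, rfl⟩ := hu
    obtain ⟨a', b', rfl⟩ := hv
    exact ⟨a + a', b + b', by simp only [map_add]; ring⟩
  | mul u v _ _ hu hv =>
    obtain ⟨a, b, rfl⟩ := hu
    obtain ⟨a', b', rfl⟩ := hv
    refine ⟨a * a' + b * b' * c, a * b' + b * a', ?_⟩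
    simp only [map_add, map_mul]
    linear_combination (algebraMap F E b * algebraMap F E b') * hγ

theorem exists_eq_sq_or_eq_mul_sq_of_sq_mem_adjoin_sqrt (h2 : (2 : F) ≠ 0)
    (hγ : γ ^ 2 = algebraMap F E c) {y : E} (hy : y ∈ F⟮γ⟯) {z : F}
    (hyz : y ^ 2 = algebraMap F E z) : ∃ w : F, z = w ^ 2 ∨ z = c * w ^ 2 := by
  obtain ⟨a, b, rfl⟩ := exists_eq_add_mul_of_mem_adjoin_sqrt hγ hy
  have hrel : algebraMap F E (2 * a * b) * γ = algebraMap F E (z - a ^ 2 - b ^ 2 * c) := by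
    simp only [map_mul, map_sub, map_pow, map_ofNat]
    linear_combination hyz - algebraMap F E b ^ 2 * hγ
  by_cases hab : 2 * a * b = 0
  · rcases mul_eq_zero.mp hab with ha | rfl
    · obtain rfl := (mul_eq_zero.mp ha).resolve_left h2
      refine ⟨b, Or.inr <| (algebraMap F E).injective ?_⟩
      simp only [map_mul, map_pow, ← hyz, ← hγ, map_zero]
      ring
    · refine ⟨a, Or.inl <| (algebraMap F E).injective ?_⟩
      simp [← hyz]
  · -- then `γ`, hence `y`, already lies in `F`
    obtain ⟨g, hg⟩ : ∃ g : F, γ = algebraMap F E g :=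
      ⟨_, by rw [map_div₀, eq_div_iff ((map_ne_zero _).mpr hab), mul_comm, hrel]⟩
    refine ⟨a + b * g, Or.inl <| (algebraMap F E).injective ?_⟩
    rw [← hyz, hg]
    simp only [map_pow, map_add, map_mul]
end

section
variable {K L ι : Type*} [Field K] [Field L] [Algebra K L] {α : ι → K} {β : ι → L}

theorem exists_prod_mul_sq_of_sq_mem_adjoin_sqrts (h2 : (2 : K) ≠ 0)
    (hα : ∀ i, α i ≠ 0) (hβ : ∀ i, β i ^ 2 = algebraMap K L (α i)) (S : Finset ι) {x : K}
    {y : L} (hy : y ∈ adjoin K (β '' S)) (hyx : y ^ 2 = algebraMap K L x) :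
    ∃ T ⊆ S, ∃ q : K, x = (∏ i ∈ T, α i) * q ^ 2 := by
  classical
  induction S using Finset.induction_on generalizing x y with
  | empty =>
    simp only [Finset.coe_empty, Set.image_empty, adjoin_empty, mem_bot] at hy
    obtain ⟨q, rfl⟩ := hy
    exact ⟨∅, subset_rfl, q, (algebraMap K L).injective (by simpa using hyx.symm)⟩
  | insert j S hj ih =>
    set F := adjoin K (β '' S)
    have hyF : y ∈ F⟮β j⟯ := by
      rwa [Finset.coe_insert, Set.image_insert_eq, Set.insert_eq, Set.union_comm,
        ← adjoin_adjoin_left, mem_restrictScalars] at hy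
    have h2F : (2 : F) ≠ 0 := by
      rw [← map_ofNat (algebraMap K F) 2]
      exact (map_ne_zero _).mpr h2
    obtain ⟨w, hw | hw⟩ := exists_eq_sq_or_eq_mul_sq_of_sq_mem_adjoin_sqrt h2F
      (c := algebraMap K F (α j)) (hβ j) hyF (z := algebraMap K F x) hyx
    · obtain ⟨T, hTS, q, rfl⟩ := ih (y := w) w.2 (by simpa using congrArg Subtype.val hw.symm)
      exact ⟨T, hTS.trans (Finset.subset_insert j S), q, rfl⟩
    · have hwL : algebraMap K L x = algebraMap K L (α j) * (w : L) ^ 2 := by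
        simpa using congrArg Subtype.val hw
      obtain ⟨T, hTS, q, hq⟩ := ih (x := α j * x) (mul_mem (F.algebraMap_mem (α j)) w.2)
        (by rw [map_mul, hwL, ← hβ j]; ring)
      refine ⟨insert j T, Finset.insert_subset_insert j hTS, q / α j, ?_⟩
      rw [Finset.prod_insert fun hjT ↦ hj (hTS hjT)]
      field_simp [hα j]
      linear_combination hq
end

theorem stmt_13 (K L : Type*) [Field K] [Field L] [Algebra K L]
    (h2 : (2 : K) ≠ 0) (r : ℕ) (α : Fin r → K) (hα : ∀ i, α i ≠ 0)
    (β : Fin r → L) (hβ : ∀ i, β i ^ 2 = algebraMap K L (α i))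
    (hgen : IntermediateField.adjoin K (Set.range β) = ⊤)
    (x : K) (hx : IsSquare (algebraMap K L x)) :
    ∃ (e : Fin r → ℕ) (q : K), (∀ i, e i ≤ 1) ∧
      x = (∏ i, α i ^ e i) * q ^ 2 := by
  obtain ⟨y, hy⟩ := hx
  have hyL : y ∈ adjoin K (β '' (Finset.univ : Finset (Fin r))) := by
    simp [hgen]
  obtain ⟨T, -, q, rfl⟩ :=
    exists_prod_mul_sq_of_sq_mem_adjoin_sqrts h2 hα hβ _ hyL (by rw [hy, sq])
  refine ⟨fun i ↦ if i ∈ T then 1 else 0, q, fun i ↦ ite_le_one le_rfl zero_le_one, ?_⟩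
  simp [pow_ite]
end

section
/- For every prime ℓ ≥ 317, the number of residues a ∈ 𝔽_ℓ failing the condition that 1+a² is not congruent to any of 0, ±(1−a²), ±(a+a³), ±(a−a³), ±(1+a³), ±(1−a³), ±(a+a²), ±(a−a²) mod ℓ is at most 37; consequently, since φ(ℓ−1) > (ℓ−1)^{log 2/log 3} > 37 for ℓ ≥ 317, there exists a ∈ ℤ_ℓ^× of multiplicative order ℓ−1 satisfying all these non-congruences. -/
/-!
A residue `b` fails one of the fifteen non-congruences exactly when it is a root of one of
fifteen polynomials of degree at most 3, none of which vanishes identically in odd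
characteristic; their product has degree 34, so at most 34 residues are bad.

Prime powers `p ^ k` with `p ≥ 5` satisfy `(p ^ k) ^ 3 ≤ φ (p ^ k) ^ 4`, and the primes 2 and 3
only cost a constant, whence `2 n ^ 3 ≤ 27 φ(n) ^ 4` (a substitute for Shapiro's bound) and
`φ(ℓ - 1) > 37`. So some generator of the cyclic group `(ZMod ℓ)ˣ` is good, and Hensel's lemma
for `X ^ (ℓ - 1) - 1` lifts it to a unit of `ℤ_[ℓ]` of the same order.
-/

/-- `a` satisfies the non-congruences \eqref{eqn:notequiv}: `1 + a²` is not
congruent to `0, ±(1−a²), ±(a+a³), ±(a−a³), ±(1+a³), ±(1−a³), ±(a+a²), ±(a−a²)`. -/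
def GoodResidue (ℓ : ℕ) (b : ZMod ℓ) : Prop :=
  1 + b ^ 2 ≠ 0 ∧
  1 + b ^ 2 ≠ 1 - b ^ 2 ∧ 1 + b ^ 2 ≠ -(1 - b ^ 2) ∧
  1 + b ^ 2 ≠ b + b ^ 3 ∧ 1 + b ^ 2 ≠ -(b + b ^ 3) ∧
  1 + b ^ 2 ≠ b - b ^ 3 ∧ 1 + b ^ 2 ≠ -(b - b ^ 3) ∧
  1 + b ^ 2 ≠ 1 + b ^ 3 ∧ 1 + b ^ 2 ≠ -(1 + b ^ 3) ∧
  1 + b ^ 2 ≠ 1 - b ^ 3 ∧ 1 + b ^ 2 ≠ -(1 - b ^ 3) ∧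
  1 + b ^ 2 ≠ b + b ^ 2 ∧ 1 + b ^ 2 ≠ -(b + b ^ 2) ∧
  1 + b ^ 2 ≠ b - b ^ 2 ∧ 1 + b ^ 2 ≠ -(b - b ^ 2)

open Polynomial
open scoped Nat

/-- The product of the fifteen differences between `1 + X²` and the right-hand sides in
`GoodResidue`, each normalized up to sign. -/
noncomputable def badPoly (R : Type*) [CommRing R] : R[X] :=
  (X ^ 2 + 1) * (C 2 * X ^ 2) * C 2 *
    (X ^ 3 - X ^ 2 + X - 1) * (X ^ 3 + X ^ 2 + X + 1) *
    (X ^ 3 + X ^ 2 - X + 1) * (X ^ 3 - X ^ 2 - X - 1) *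
    (X ^ 3 - X ^ 2) * (X ^ 3 + X ^ 2 + C 2) * (X ^ 3 + X ^ 2) * (X ^ 3 - X ^ 2 - C 2) *
    (X - 1) * (C 2 * X ^ 2 + X + 1) * (C 2 * X ^ 2 - X + 1) * (X + 1)

theorem natDegree_badPoly {K : Type*} [Field K] (h2 : (2 : K) ≠ 0) :
    (badPoly K).natDegree = 34 := by
  unfold badPoly
  compute_degree!
  convert pow_ne_zero 4 h2 using 1
  norm_num

theorem eval_badPoly_eq_zero {ℓ : ℕ} [Fact ℓ.Prime] {b : ZMod ℓ} (hb : ¬ GoodResidue ℓ b) :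
    (badPoly (ZMod ℓ)).eval b = 0 := by
  contrapose! hb
  simp only [badPoly, eval_mul, eval_add, eval_sub, eval_pow, eval_X, eval_C, eval_one, ne_eq,
    mul_eq_zero, or_assoc, not_or] at hb
  obtain ⟨h1, h2, hsq, -, h4, h5, h6, h7, h8, h9, h10, h11, h12, h13, h14, h15⟩ := hb
  exact ⟨fun h => h1 (by linear_combination h),
    fun h => mul_ne_zero h2 hsq (by linear_combination h),
    fun h => h2 (by linear_combination h),
    fun h => h4 (by linear_combination -h),
    fun h => h5 (by linear_combination h),
    fun h => h6 (by linear_combination h),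
    fun h => h7 (by linear_combination -h),
    fun h => h8 (by linear_combination -h),
    fun h => h9 (by linear_combination h),
    fun h => h10 (by linear_combination h),
    fun h => h11 (by linear_combination -h),
    fun h => h12 (by linear_combination -h),
    fun h => h13 (by linear_combination h),
    fun h => h14 (by linear_combination h),
    fun h => h15 (by linear_combination h)⟩

theorem ncard_not_goodResidue_le {ℓ : ℕ} [Fact ℓ.Prime] (hℓ : ℓ ≠ 2) :
    {b : ZMod ℓ | ¬ GoodResidue ℓ b}.ncard ≤ 34 := by
  have h2 : (2 : ZMod ℓ) ≠ 0 := Ring.two_ne_zero (by rwa [ZMod.ringChar_zmod_n])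
  have hdeg := natDegree_badPoly h2
  have hP : badPoly (ZMod ℓ) ≠ 0 := ne_zero_of_natDegree_gt (n := 0) (by omega)
  calc {b : ZMod ℓ | ¬ GoodResidue ℓ b}.ncard ≤ ((badPoly (ZMod ℓ)).rootSet (ZMod ℓ)).ncard :=
        Set.ncard_le_ncard fun b hb => mem_rootSet.2 ⟨hP, by simpa using eval_badPoly_eq_zero hb⟩
    _ ≤ 34 := hdeg ▸ ncard_rootSet_le _ _

namespace Nat

theorem pow_three_mul_sub_one_pow_four_le {p k : ℕ} (hp : p.Prime) (hk : k ≠ 0) :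
    (p ^ k) ^ 3 * (p - 1) ^ 4 ≤ p ^ 3 * φ (p ^ k) ^ 4 := by
  obtain ⟨j, rfl⟩ := exists_eq_add_one_of_ne_zero hk
  rw [totient_prime_pow_succ hp]
  calc (p ^ (j + 1)) ^ 3 * (p - 1) ^ 4 = p ^ (3 * j) * (p ^ 3 * (p - 1) ^ 4) := by ring
    _ ≤ p ^ (4 * j) * (p ^ 3 * (p - 1) ^ 4) := by gcongr <;> [exact hp.one_le; omega]
    _ = p ^ 3 * (p ^ j * (p - 1)) ^ 4 := by ring

theorem pow_three_le_totient_pow_four_of_five_le {p k : ℕ} (hp : p.Prime) (hp5 : 5 ≤ p) :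
    (p ^ k) ^ 3 ≤ φ (p ^ k) ^ 4 := by
  rcases eq_or_ne k 0 with rfl | hk
  · simp
  have hcube : p ^ 3 ≤ (p - 1) ^ 4 := by
    obtain ⟨q, rfl⟩ := exists_add_of_le hp5
    rw [show 5 + q - 1 = 4 + q by omega]
    nlinarith [sq_nonneg q]
  refine le_of_mul_le_mul_left ?_ (pow_pos hp.pos 3)
  calc p ^ 3 * (p ^ k) ^ 3 ≤ (p ^ k) ^ 3 * (p - 1) ^ 4 := by rw [mul_comm]; gcongr
    _ ≤ p ^ 3 * φ (p ^ k) ^ 4 := pow_three_mul_sub_one_pow_four_le hp hk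

theorem pow_three_le_totient_pow_four_of_coprime_six {n : ℕ} (hn : n.Coprime 6) :
    n ^ 3 ≤ φ n ^ 4 := by
  induction n using recOnPosPrimePosCoprime with
  | prime_pow p k hp hk =>
    have hp6 : p.Coprime 6 := Coprime.coprime_dvd_left (dvd_pow_self p hk.ne') hn
    refine pow_three_le_totient_pow_four_of_five_le hp (hp.five_le_of_ne_two_of_ne_three ?_ ?_)
    all_goals rintro rfl; norm_num at hp6
  | zero => simp at hn
  | one => simp
  | coprime a b _ _ hab iha ihb =>
    rw [totient_mul hab, mul_pow, mul_pow]
    exact Nat.mul_le_mul (iha (Coprime.coprime_mul_right hn)) (ihb (Coprime.coprime_mul_left hn))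

theorem two_mul_pow_three_le_totient_pow_four (n : ℕ) : 2 * n ^ 3 ≤ 27 * φ n ^ 4 := by
  rcases eq_or_ne n 0 with rfl | hn
  · simp
  obtain ⟨a, n', h2n', rfl⟩ := exists_eq_pow_mul_and_not_dvd hn 2 (by norm_num)
  obtain ⟨b, m, h3m', rfl⟩ :=
    exists_eq_pow_mul_and_not_dvd (right_ne_zero_of_mul hn) 3 (by norm_num)
  have h2m : (2 : ℕ).Coprime m := prime_two.coprime_iff_not_dvd.2 fun h => h2n' (h.mul_left _)
  have h3m : (3 : ℕ).Coprime m := prime_three.coprime_iff_not_dvd.2 h3m'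
  have h2 : (2 ^ a) ^ 3 ≤ 8 * φ (2 ^ a) ^ 4 := by
    rcases eq_or_ne a 0 with rfl | ha
    · simp
    simpa using pow_three_mul_sub_one_pow_four_le prime_two ha
  have h3 : 16 * (3 ^ b) ^ 3 ≤ 27 * φ (3 ^ b) ^ 4 := by
    rcases eq_or_ne b 0 with rfl | hb
    · simp
    simpa [mul_comm] using pow_three_mul_sub_one_pow_four_le prime_three hb
  have hm := pow_three_le_totient_pow_four_of_coprime_six (Coprime.mul_left h2m h3m).symm
  rw [totient_mul ((Coprime.mul_right ((by norm_num : Coprime 2 3).pow_right b) h2m).pow_left a),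
    totient_mul (h3m.pow_left b)]
  refine le_of_mul_le_mul_left ?_ (show 0 < 8 by norm_num)
  calc 8 * (2 * (2 ^ a * (3 ^ b * m)) ^ 3) = (2 ^ a) ^ 3 * (16 * (3 ^ b) ^ 3) * m ^ 3 := by ring
    _ ≤ (8 * φ (2 ^ a) ^ 4) * (27 * φ (3 ^ b) ^ 4) * φ m ^ 4 := by gcongr
    _ = 8 * (27 * (φ (2 ^ a) * (φ (3 ^ b) * φ m)) ^ 4) := by ring

theorem thirty_seven_lt_totient {n : ℕ} (hn : 316 ≤ n) : 37 < φ n := by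
  by_contra! h
  have := two_mul_pow_three_le_totient_pow_four n
  have := pow_le_pow_left' h 4
  have := pow_le_pow_left' hn 3
  omega

end Nat

theorem IsCyclic.exists_orderOf_eq_card_notMem {G : Type*} [Group G] [Fintype G] [IsCyclic G]
    {B : Set G} (hB : B.ncard < φ (Fintype.card G)) :
    ∃ g : G, orderOf g = Fintype.card G ∧ g ∉ B := by
  classical
  have hgen : {g : G | orderOf g = Fintype.card G}.ncard = φ (Fintype.card G) := by
    rw [← IsCyclic.card_orderOf_eq_totient dvd_rfl, ← Set.ncard_coe_finset]
    simp
  exact Set.exists_mem_notMem_of_ncard_lt_ncard (hB.trans_eq hgen.symm)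

namespace PadicInt

variable {p : ℕ} [Fact p.Prime]

theorem toZMod_eq_zero_iff_norm_lt_one (x : ℤ_[p]) : toZMod x = 0 ↔ ‖x‖ < 1 := by
  rw [← RingHom.mem_ker, ker_toZMod, IsLocalRing.mem_maximalIdeal, mem_nonunits]

theorem norm_eq_one_of_toZMod_ne_zero {x : ℤ_[p]} (hx : toZMod x ≠ 0) : ‖x‖ = 1 :=
  (norm_le_one x).antisymm (not_lt.1 (mt (toZMod_eq_zero_iff_norm_lt_one x).2 hx))

theorem exists_pow_eq_one_toZMod_eq {b : ZMod p} (hb : b ≠ 0) :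
    ∃ z : ℤ_[p], z ^ (p - 1) = 1 ∧ toZMod z = b := by
  set a : ℤ_[p] := (b.val : ℤ_[p])
  have ha : toZMod a = b := by simp [a]
  set F : ℤ_[p][X] := X ^ (p - 1) - 1
  have hFa : ‖F.aeval a‖ < 1 := by
    rw [coe_aeval_eq_eval, ← toZMod_eq_zero_iff_norm_lt_one]
    simp [F, ha, ZMod.pow_card_sub_one_eq_one hb]
  have hF'a : ‖F.derivative.aeval a‖ = 1 := by
    refine norm_eq_one_of_toZMod_ne_zero ?_
    simp only [F, derivative_sub, derivative_X_pow, derivative_one, sub_zero, coe_aeval_eq_eval,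
      eval_X, map_mul, map_pow, map_natCast, ha]
    refine mul_ne_zero ?_ (pow_ne_zero _ hb)
    rw [Nat.cast_sub (Fact.out : p.Prime).one_le, ZMod.natCast_self]
    simp
  obtain ⟨z, hz, hza, -⟩ := hensels_lemma (hFa.trans_eq (by rw [hF'a, one_pow]))
  refine ⟨z, by simpa [F, sub_eq_zero] using hz, ?_⟩
  rw [hF'a, ← toZMod_eq_zero_iff_norm_lt_one, map_sub, sub_eq_zero] at hza
  rw [hza, ha]

theorem exists_orderOf_eq_toZMod_eq {u : (ZMod p)ˣ} (hu : orderOf u = p - 1) :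
    ∃ a : ℤ_[p]ˣ, orderOf a = p - 1 ∧ toZMod (a : ℤ_[p]) = u := by
  have hp : p - 1 ≠ 0 := by have := (Fact.out : p.Prime).two_le; omega
  obtain ⟨z, hz, hzu⟩ := exists_pow_eq_one_toZMod_eq u.ne_zero
  set a := Units.ofPowEqOne z (p - 1) hz hp
  have hau : Units.map toZMod.toMonoidHom a = u := Units.ext hzu
  refine ⟨a, dvd_antisymm (orderOf_dvd_of_pow_eq_one (Units.pow_ofPowEqOne hz hp)) ?_, hzu⟩
  have := orderOf_map_dvd (Units.map toZMod.toMonoidHom) a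
  rwa [hau, hu] at this

end PadicInt

theorem stmt_16 (ℓ : ℕ) [Fact ℓ.Prime] (hℓ : 317 ≤ ℓ) :
    {b : ZMod ℓ | ¬ GoodResidue ℓ b}.ncard ≤ 37 ∧
      ∃ a : ℤ_[ℓ]ˣ, orderOf a = ℓ - 1 ∧
        GoodResidue ℓ (PadicInt.toZMod ((a : ℤ_[ℓ]))) := by
  have hbad : {b : ZMod ℓ | ¬ GoodResidue ℓ b}.ncard ≤ 34 := ncard_not_goodResidue_le (by omega)
  refine ⟨hbad.trans (by norm_num), ?_⟩
  have hfew : (((↑) : (ZMod ℓ)ˣ → ZMod ℓ) ⁻¹' {b | ¬ GoodResidue ℓ b}).ncard <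
      φ (Fintype.card (ZMod ℓ)ˣ) := by
    rw [ZMod.card_units]
    calc _ ≤ {b : ZMod ℓ | ¬ GoodResidue ℓ b}.ncard :=
          Set.ncard_le_ncard_of_injOn Units.val (fun _ h => h) Units.val_injective.injOn
      _ < φ (ℓ - 1) := by have := Nat.thirty_seven_lt_totient (n := ℓ - 1) (by omega); omega
  obtain ⟨u, hu, hgood⟩ := IsCyclic.exists_orderOf_eq_card_notMem hfew
  obtain ⟨a, ha, hau⟩ := PadicInt.exists_orderOf_eq_toZMod_eq (hu.trans (ZMod.card_units ℓ))
  exact ⟨a, ha, hau ▸ not_not.mp hgood⟩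
end

section
/- Let ℓ be an odd prime, n ≥ 1, ζ a primitive ℓ^n-th root of unity, and let i, j be integers with i, j, i+j, i−j all nonzero mod ℓ^n. Then E(ζ^i, ζ^j) and F(ζ^i, ζ^j) are algebraic units (units of the ring of integers of ℚ(ζ)), fixed by complex conjugation, summing to 1; in particular the unit equation ε + δ = 1 has a solution in units of the ring of integers of the maximal real subfield ℚ(ζ)⁺. -/
/-!
Multiplying numerator and denominator by `α ^ 2` gives
`E = (1 + α⁴) / ((1 + (αβ)²) (1 + (α/β)²))`, and for a root of unity `ω ≠ 1` of odd order `1 + ω`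
is a unit: writing the order as `2c + 1`, its inverse is the geometric sum `∑_{k ≤ c} ω^{2k}`.
Expanding the common denominator of `E` and `F` gives `α² + α⁻² + β² + β⁻²`, so `E + F = 1`.
An automorphism inverting `ζ` inverts `α` and `β` and hence fixes `E` and `F`. Finally `E` and `F`
are rational expressions in the numbers `w + w⁻¹` with `w` a power of `ζ`, and `w^m + w^{-m}` is
a polynomial in `w + w⁻¹` (a Dickson polynomial).
-/

open Polynomial Finset

def IsIntegralUnit {K : Type*} [Field K] (x : K) : Prop :=
  x ≠ 0 ∧ IsIntegral ℤ x ∧ IsIntegral ℤ x⁻¹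

namespace IsIntegralUnit

variable {K : Type*} [Field K] {x y : K}

theorem mul (hx : IsIntegralUnit x) (hy : IsIntegralUnit y) : IsIntegralUnit (x * y) :=
  ⟨mul_ne_zero hx.1 hy.1, hx.2.1.mul hy.2.1, by rw [mul_inv]; exact hx.2.2.mul hy.2.2⟩

theorem inv (hx : IsIntegralUnit x) : IsIntegralUnit x⁻¹ :=
  ⟨inv_ne_zero hx.1, hx.2.2, by rw [inv_inv]; exact hx.2.1⟩

theorem div (hx : IsIntegralUnit x) (hy : IsIntegralUnit y) : IsIntegralUnit (x / y) :=
  div_eq_mul_inv x y ▸ hx.mul hy.inv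

end IsIntegralUnit

section RootsOfUnity

variable {K : Type*} [Field K] {ω : K} {d : ℕ}

theorem isIntegral_of_pow_eq_one (hd : 0 < d) (hω : ω ^ d = 1) : IsIntegral ℤ ω :=
  (IsPrimitiveRoot.orderOf ω).isIntegral
    (orderOf_pos_iff.mpr (isOfFinOrder_iff_pow_eq_one.mpr ⟨d, hd, hω⟩))

theorem sq_pow_succ_eq_self {c : ℕ} (hω : ω ^ (2 * c + 1) = 1) : (ω ^ 2) ^ (c + 1) = ω := by
  rw [← pow_mul, mul_add_one, pow_succ, hω, one_mul]

theorem sq_ne_one_of_pow_eq_one (hd : Odd d) (hω : ω ^ d = 1) (h1 : ω ≠ 1) : ω ^ 2 ≠ 1 := by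
  obtain ⟨c, rfl⟩ := hd
  intro h2
  rw [← sq_pow_succ_eq_self hω, h2, one_pow] at h1
  exact h1 rfl

theorem isIntegralUnit_one_add (hd : Odd d) (hω : ω ^ d = 1) (h1 : ω ≠ 1) :
    IsIntegralUnit (1 + ω) := by
  have hω_int := isIntegral_of_pow_eq_one hd.pos hω
  have hne : 1 + ω ≠ 0 := by
    intro h
    have hω' : ω = -1 := eq_neg_of_add_eq_zero_right h
    rw [hω', hd.neg_one_pow] at hω
    exact h1 (hω'.trans hω)
  obtain ⟨c, rfl⟩ := hd
  have hinv : (1 + ω) * ∑ k ∈ range (c + 1), (ω ^ 2) ^ k = 1 := by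
    apply mul_right_cancel₀ (sub_ne_zero_of_ne h1)
    calc (1 + ω) * (∑ k ∈ range (c + 1), (ω ^ 2) ^ k) * (ω - 1)
        = (∑ k ∈ range (c + 1), (ω ^ 2) ^ k) * (ω ^ 2 - 1) := by ring
      _ = 1 * (ω - 1) := by rw [geom_sum_mul, sq_pow_succ_eq_self hω, one_mul]
  refine ⟨hne, isIntegral_one.add hω_int, ?_⟩
  rw [inv_eq_of_mul_eq_one_right hinv]
  exact IsIntegral.sum _ fun k _ ↦ (hω_int.pow 2).pow k

theorem isIntegralUnit_one_add_sq (hd : Odd d) (hω : ω ^ d = 1) (h1 : ω ≠ 1) :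
    IsIntegralUnit (1 + ω ^ 2) :=
  isIntegralUnit_one_add hd (by rw [← pow_mul, mul_comm, pow_mul, hω, one_pow])
    (sq_ne_one_of_pow_eq_one hd hω h1)

end RootsOfUnity

section UnitRatio

variable {K : Type*} [Field K]

-- The paper's `E(α, β)`; its `F(α, β)` is `unitRatio β α`.
def unitRatio (x y : K) : K :=
  (x ^ 2 + x⁻¹ ^ 2) / ((x * y⁻¹ + x⁻¹ * y) * (x * y + x⁻¹ * y⁻¹))

-- `unitRatio x y ≠ 0` excludes the junk value of division by zero, i.e. a vanishing denominator.
theorem unitRatio_add_unitRatio_swap {x y : K} (h : unitRatio x y ≠ 0) :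
    unitRatio x y + unitRatio y x = 1 := by
  have hD := (div_ne_zero_iff.mp h).2
  have hx : x ≠ 0 := by rintro rfl; simp at hD
  have hy : y ≠ 0 := by rintro rfl; simp at hD
  have hswap : unitRatio y x = (y ^ 2 + y⁻¹ ^ 2) / ((x * y⁻¹ + x⁻¹ * y) * (x * y + x⁻¹ * y⁻¹)) := by
    unfold unitRatio; ring
  rw [unitRatio, hswap, ← add_div, div_eq_one_iff_eq hD]
  field_simp
  ring

theorem unitRatio_eq_div {x y : K} (hx : x ≠ 0) (hy : y ≠ 0) :
    unitRatio x y = (1 + (x ^ 2) ^ 2) / ((1 + (x * y) ^ 2) * (1 + (x * y⁻¹) ^ 2)) := by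
  calc unitRatio x y
      = (x⁻¹ ^ 2 * (1 + (x ^ 2) ^ 2)) / (x⁻¹ ^ 2 * ((1 + (x * y) ^ 2) * (1 + (x * y⁻¹) ^ 2))) := by
        unfold unitRatio
        congr 1 <;> field_simp <;> ring
    _ = _ := mul_div_mul_left _ _ (pow_ne_zero 2 (inv_ne_zero hx))

theorem isIntegralUnit_unitRatio {d : ℕ} (hd : Odd d) {x y : K} (hx : x ^ d = 1) (hy : y ^ d = 1)
    (hx1 : x ≠ 1) (hxy : x * y ≠ 1) (hxy' : x * y⁻¹ ≠ 1) : IsIntegralUnit (unitRatio x y) := by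
  have hx0 : x ≠ 0 := ne_zero_pow hd.pos.ne' (hx ▸ one_ne_zero)
  have hy0 : y ≠ 0 := ne_zero_pow hd.pos.ne' (hy ▸ one_ne_zero)
  rw [unitRatio_eq_div hx0 hy0]
  refine (isIntegralUnit_one_add_sq hd ?_ (sq_ne_one_of_pow_eq_one hd hx hx1)).div
    ((isIntegralUnit_one_add_sq hd ?_ hxy).mul (isIntegralUnit_one_add_sq hd ?_ hxy'))
  · rw [← pow_mul, mul_comm, pow_mul, hx, one_pow]
  · rw [mul_pow, hx, hy, one_mul]
  · rw [mul_pow, inv_pow, hx, hy, inv_one, mul_one]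

theorem map_unitRatio (σ : K →+* K) {x y : K} (hx : σ x = x⁻¹) (hy : σ y = y⁻¹) :
    σ (unitRatio x y) = unitRatio x y := by
  simp only [unitRatio, map_div₀, map_add, map_mul, map_pow, map_inv₀, hx, hy, inv_inv]
  congr 1 <;> ring

theorem unitRatio_eq_div_add_inv (x y : K) :
    unitRatio x y = (x ^ 2 + (x ^ 2)⁻¹) / ((x * y⁻¹ + (x * y⁻¹)⁻¹) * (x * y + (x * y)⁻¹)) := by
  simp only [unitRatio, inv_pow, mul_inv, inv_inv]

end UnitRatio

section RealSubfield

variable {K : Type*} [Field K] [CharZero K] {x : K}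

theorem pow_add_inv_pow_mem_adjoin (hx : x ≠ 0) (m : ℕ) :
    x ^ m + x⁻¹ ^ m ∈ IntermediateField.adjoin ℚ {x + x⁻¹} := by
  have h := aeval_mem_adjoin_singleton ℚ (x + x⁻¹) (p := dickson 1 (1 : ℚ) m)
  rw [aeval_def, eval₂_eq_eval_map, map_dickson, map_one,
    dickson_one_one_eval_add_inv x x⁻¹ (mul_inv_cancel₀ hx)] at h
  exact IntermediateField.algebra_adjoin_le_adjoin ℚ _ h

theorem zpow_add_inv_mem_adjoin (hx : x ≠ 0) (k : ℤ) :
    x ^ k + (x ^ k)⁻¹ ∈ IntermediateField.adjoin ℚ {x + x⁻¹} := by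
  obtain ⟨m, rfl | rfl⟩ := Int.eq_nat_or_neg k
  · simpa [inv_pow] using pow_add_inv_pow_mem_adjoin hx m
  · simpa [inv_pow, add_comm] using pow_add_inv_pow_mem_adjoin hx m

theorem unitRatio_zpow_mem_adjoin (hx : x ≠ 0) (i j : ℤ) :
    unitRatio (x ^ i) (x ^ j) ∈ IntermediateField.adjoin ℚ {x + x⁻¹} := by
  have h2 : (x ^ i) ^ 2 = x ^ (2 * i) := by rw [mul_comm, zpow_mul]; norm_cast
  have hsub : x ^ i * (x ^ j)⁻¹ = x ^ (i - j) := by rw [zpow_sub₀ hx, div_eq_mul_inv]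
  have hadd : x ^ i * x ^ j = x ^ (i + j) := (zpow_add₀ hx i j).symm
  rw [unitRatio_eq_div_add_inv, h2, hsub, hadd]
  exact div_mem (zpow_add_inv_mem_adjoin hx _)
    (mul_mem (zpow_add_inv_mem_adjoin hx _) (zpow_add_inv_mem_adjoin hx _))

end RealSubfield

theorem stmt_19_general (ℓ : ℕ) (hodd : Odd ℓ) (n : ℕ)
    (K : Type*) [Field K] [CharZero K] (ζ : K)
    (hζ : IsPrimitiveRoot ζ (ℓ ^ n)) (i j : ℤ)
    (hi : ¬ ((ℓ : ℤ) ^ n ∣ i)) (hj : ¬ ((ℓ : ℤ) ^ n ∣ j))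
    (hij : ¬ ((ℓ : ℤ) ^ n ∣ (i + j))) (hij' : ¬ ((ℓ : ℤ) ^ n ∣ (i - j))) :
    let α : K := ζ ^ i
    let β : K := ζ ^ j
    let E : K := (α ^ 2 + (α⁻¹) ^ 2) /
      ((α * β⁻¹ + α⁻¹ * β) * (α * β + α⁻¹ * β⁻¹))
    let F : K := (β ^ 2 + (β⁻¹) ^ 2) /
      ((α * β⁻¹ + α⁻¹ * β) * (α * β + α⁻¹ * β⁻¹))
    -- `E` and `F` are algebraic units, fixed by complex conjugation, summing to 1;
    -- in particular they give a solution of the unit equation in the units of the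
    -- ring of integers of the maximal real subfield ℚ(ζ + ζ⁻¹).
    E + F = 1 ∧
      IsIntegral ℤ E ∧ IsIntegral ℤ E⁻¹ ∧ IsIntegral ℤ F ∧ IsIntegral ℤ F⁻¹ ∧
      (∀ σ : K →+* K, σ ζ = ζ⁻¹ → σ E = E ∧ σ F = F) ∧
      E ∈ IntermediateField.adjoin ℚ {ζ + ζ⁻¹} ∧
      F ∈ IntermediateField.adjoin ℚ {ζ + ζ⁻¹} := by
  intro α β E F
  have hF : F = unitRatio β α := by simp only [F, unitRatio]; ring
  have hζ0 : ζ ≠ 0 := hζ.ne_zero (pow_pos hodd.pos n).ne'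
  have hroot (k : ℤ) : (ζ ^ k) ^ (ℓ ^ n) = 1 := by
    rw [← zpow_natCast, ← zpow_mul, mul_comm, zpow_mul, zpow_natCast, hζ.pow_eq_one, one_zpow]
  have hne_one {k : ℤ} (hk : ¬ (ℓ : ℤ) ^ n ∣ k) : ζ ^ k ≠ 1 :=
    fun h ↦ hk (by exact_mod_cast (hζ.zpow_eq_one_iff_dvd k).mp h)
  have hαβ : α * β = ζ ^ (i + j) := (zpow_add₀ hζ0 i j).symm
  have hαβ' : α * β⁻¹ = ζ ^ (i - j) := by rw [zpow_sub₀ hζ0, div_eq_mul_inv]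
  have hβα' : β * α⁻¹ = ζ ^ (j - i) := by rw [zpow_sub₀ hζ0, div_eq_mul_inv]
  have hE_unit : IsIntegralUnit E := isIntegralUnit_unitRatio hodd.pow (hroot i) (hroot j)
    (hne_one hi) (hαβ ▸ hne_one hij) (hαβ' ▸ hne_one hij')
  have hF_unit : IsIntegralUnit F := hF ▸ isIntegralUnit_unitRatio hodd.pow (hroot j) (hroot i)
    (hne_one hj) (mul_comm α β ▸ hαβ ▸ hne_one hij)
    (hβα' ▸ hne_one (by rwa [← dvd_neg, neg_sub]))
  have hconj (σ : K →+* K) (hσ : σ ζ = ζ⁻¹) (k : ℤ) : σ (ζ ^ k) = (ζ ^ k)⁻¹ := by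
    rw [map_zpow₀, hσ, inv_zpow]
  refine ⟨hF ▸ unitRatio_add_unitRatio_swap hE_unit.1, hE_unit.2.1, hE_unit.2.2, hF_unit.2.1,
    hF_unit.2.2, fun σ hσ ↦ ?_, unitRatio_zpow_mem_adjoin hζ0 i j,
    hF ▸ unitRatio_zpow_mem_adjoin hζ0 j i⟩
  exact ⟨map_unitRatio σ (hconj σ hσ i) (hconj σ hσ j),
    hF ▸ map_unitRatio σ (hconj σ hσ j) (hconj σ hσ i)⟩

theorem stmt_19 (ℓ : ℕ) (hℓ : ℓ.Prime) (hodd : Odd ℓ) (n : ℕ) (hn : 1 ≤ n)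
    (K : Type*) [Field K] [CharZero K] (ζ : K)
    (hζ : IsPrimitiveRoot ζ (ℓ ^ n)) (i j : ℤ)
    (hi : ¬ ((ℓ : ℤ) ^ n ∣ i)) (hj : ¬ ((ℓ : ℤ) ^ n ∣ j))
    (hij : ¬ ((ℓ : ℤ) ^ n ∣ (i + j))) (hij' : ¬ ((ℓ : ℤ) ^ n ∣ (i - j))) :
    let α : K := ζ ^ i
    let β : K := ζ ^ j
    let E : K := (α ^ 2 + (α⁻¹) ^ 2) /
      ((α * β⁻¹ + α⁻¹ * β) * (α * β + α⁻¹ * β⁻¹))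
    let F : K := (β ^ 2 + (β⁻¹) ^ 2) /
      ((α * β⁻¹ + α⁻¹ * β) * (α * β + α⁻¹ * β⁻¹))
    -- `E` and `F` are algebraic units, fixed by complex conjugation, summing to 1;
    -- in particular they give a solution of the unit equation in the units of the
    -- ring of integers of the maximal real subfield ℚ(ζ + ζ⁻¹).
    E + F = 1 ∧
      IsIntegral ℤ E ∧ IsIntegral ℤ E⁻¹ ∧ IsIntegral ℤ F ∧ IsIntegral ℤ F⁻¹ ∧
      (∀ σ : K →+* K, σ ζ = ζ⁻¹ → σ E = E ∧ σ F = F) ∧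
      E ∈ IntermediateField.adjoin ℚ {ζ + ζ⁻¹} ∧
      F ∈ IntermediateField.adjoin ℚ {ζ + ζ⁻¹} :=
  stmt_19_general ℓ hodd n K ζ hζ i j hi hj hij hij'
end
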